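/- arXiv:2211.01220 — 2 statements merged into one kernel-verified Lean document; each statement's English description precedes it below -/
import Mathlib

section
/- Let K ≥ 1, L > 0, and let (Z_k^n)_{n∈[K],k∈[K]} be jointly distributed finitely-valued random variables such that for every n ∈ [K] the family (Z_1^n, …, Z_K^n) is (K,n)-MDS with symbol size L. Write Z_k^{≤n} = (Z_k^1, …, Z_k^n). Then for every n ∈ [K], every k ∈ [K], and every subset U ⊆ [K]\{k} with |U| = n: I(Z_k^{≤n}; (Z_u^{≤n})_{u∈U}) = H(Z_k^{≤n}). -/
open scoped BigOperators

open Classical in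
/-- The probability that the finitely-valued random variable `X` takes the value `s`,
under the probability weights `μ` on the finite sample space `Ω`. -/
noncomputable def probOf {Ω S : Type*} [Fintype Ω] (μ : Ω → ℝ) (X : Ω → S) (s : S) : ℝ :=
  ∑ ω ∈ Finset.univ.filter (fun ω => X ω = s), μ ω

/-- Shannon entropy (in bits) of a finitely-valued random variable. -/
noncomputable def Hent {Ω S : Type*} [Fintype Ω] [Fintype S] (μ : Ω → ℝ) (X : Ω → S) : ℝ :=
  - ∑ s : S, probOf μ X s * Real.logb 2 (probOf μ X s)

/-- Conditional entropy H(X | Y) (in bits). -/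
noncomputable def Hcond {Ω S T : Type*} [Fintype Ω] [Fintype S] [Fintype T]
    (μ : Ω → ℝ) (X : Ω → S) (Y : Ω → T) : ℝ :=
  Hent μ (fun ω => (X ω, Y ω)) - Hent μ Y

/-- Mutual information I(X ; Y) (in bits). -/
noncomputable def MI {Ω S T : Type*} [Fintype Ω] [Fintype S] [Fintype T]
    (μ : Ω → ℝ) (X : Ω → S) (Y : Ω → T) : ℝ :=
  Hent μ X + Hent μ Y - Hent μ (fun ω => (X ω, Y ω))

/-- Conditional mutual information I(X ; Y | Z) (in bits). -/
noncomputable def CMI {Ω S T U : Type*} [Fintype Ω] [Fintype S] [Fintype T] [Fintype U]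
    (μ : Ω → ℝ) (X : Ω → S) (Y : Ω → T) (Z : Ω → U) : ℝ :=
  Hcond μ X Z - Hcond μ X (fun ω => (Y ω, Z ω))

/-- `Zle ZM n k` is the tuple `Z_k^{≤ n} = (Z_k^1, …, Z_k^n)` (0-indexed: levels `0,…,n`). -/
def Zle {Ω T : Type*} {K : ℕ} (ZM : Fin K → Fin K → Ω → T) (n k : Fin K) :
    Ω → (Fin (n.1 + 1) → T) :=
  fun ω m => ZM (Fin.castLE n.isLt m) k ω

section Aux

variable {Ω S T : Type*} [Fintype Ω] [Fintype S] [Fintype T]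

lemma probOf_nonneg (μ : Ω → ℝ) (hμ0 : ∀ ω, 0 ≤ μ ω) (X : Ω → S) (s : S) :
    0 ≤ probOf μ X s :=
  Finset.sum_nonneg fun ω _ => hμ0 ω

lemma exists_of_probOf_ne_zero (μ : Ω → ℝ) (X : Ω → S) (s : S)
    (h : probOf μ X s ≠ 0) : ∃ ω, μ ω ≠ 0 ∧ X ω = s := by
  classical
  obtain ⟨ω, hω, hne⟩ := Finset.exists_ne_zero_of_sum_ne_zero h
  exact ⟨ω, hne, (Finset.mem_filter.mp hω).2⟩

lemma le_probOf (μ : Ω → ℝ) (hμ0 : ∀ ω, 0 ≤ μ ω) (X : Ω → S) (ω : Ω) :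
    μ ω ≤ probOf μ X (X ω) := by
  classical
  exact Finset.single_le_sum (fun ω' _ => hμ0 ω')
    (Finset.mem_filter.mpr ⟨Finset.mem_univ ω, rfl⟩)

lemma probOf_marginal (μ : Ω → ℝ) (X : Ω → S) (Y : Ω → T) (y : T) :
    ∑ x : S, probOf μ (fun ω => (X ω, Y ω)) (x, y) = probOf μ Y y := by
  classical
  unfold probOf
  rw [← Finset.sum_fiberwise_of_maps_to (g := X) (t := Finset.univ)
      (fun ω _ => Finset.mem_univ (X ω)) μ]
  apply Finset.sum_congr rfl
  intro x _
  apply Finset.sum_congr _ (fun _ _ => rfl)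
  ext ω
  simp only [Finset.mem_filter, Finset.mem_univ, true_and, Prod.mk.injEq]
  tauto

lemma Hent_comp_injective (μ : Ω → ℝ) (X : Ω → S) (f : S → T)
    (hf : Function.Injective f) :
    Hent μ (fun ω => f (X ω)) = Hent μ X := by
  classical
  unfold Hent
  congr 1
  have h0 : ∀ t ∈ Finset.univ, t ∉ Finset.univ.image f →
      probOf μ (fun ω => f (X ω)) t * Real.logb 2 (probOf μ (fun ω => f (X ω)) t) = 0 := by
    intro t _ ht
    have : probOf μ (fun ω => f (X ω)) t = 0 := by
      unfold probOf
      rw [Finset.filter_false_of_mem, Finset.sum_empty]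
      intro ω _ h
      exact ht (Finset.mem_image.mpr ⟨X ω, Finset.mem_univ _, h⟩)
    rw [this]; simp
  rw [← Finset.sum_subset (Finset.subset_univ (Finset.univ.image f)) h0,
    Finset.sum_image (fun a _ b _ h => hf h)]
  apply Finset.sum_congr rfl
  intro s _
  have : probOf μ (fun ω => f (X ω)) (f s) = probOf μ X s := by
    unfold probOf
    congr 1
    apply Finset.filter_congr
    intro ω _
    simp [hf.eq_iff]
  rw [this]

lemma Hent_pair_sub (μ : Ω → ℝ) (X : Ω → S) (Y : Ω → T) :
    Hent μ (fun ω => (X ω, Y ω)) - Hent μ Y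
      = ∑ p : S × T, probOf μ (fun ω => (X ω, Y ω)) p *
          (Real.logb 2 (probOf μ Y p.2)
            - Real.logb 2 (probOf μ (fun ω => (X ω, Y ω)) p)) := by
  classical
  have hterm : ∀ y : T, probOf μ Y y * Real.logb 2 (probOf μ Y y)
      = ∑ x : S, probOf μ (fun ω => (X ω, Y ω)) (x, y) * Real.logb 2 (probOf μ Y y) := by
    intro y
    rw [← Finset.sum_mul, probOf_marginal]
  have hY : (∑ s : T, probOf μ Y s * Real.logb 2 (probOf μ Y s))
      = ∑ p : S × T, probOf μ (fun ω => (X ω, Y ω)) p * Real.logb 2 (probOf μ Y p.2) := by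
    rw [Fintype.sum_prod_type_right]
    apply Finset.sum_congr rfl
    intro y _
    rw [hterm y]
  unfold Hent
  rw [hY]
  simp only [mul_sub]
  rw [Finset.sum_sub_distrib]
  ring

lemma Hent_pair_term_nonneg (μ : Ω → ℝ) (hμ0 : ∀ ω, 0 ≤ μ ω) (X : Ω → S) (Y : Ω → T)
    (p : S × T) :
    0 ≤ probOf μ (fun ω => (X ω, Y ω)) p *
        (Real.logb 2 (probOf μ Y p.2)
          - Real.logb 2 (probOf μ (fun ω => (X ω, Y ω)) p)) := by
  classical
  by_cases hq : probOf μ (fun ω => (X ω, Y ω)) p = 0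
  · rw [hq]; ring_nf; exact le_refl 0
  · have hq0 : 0 < probOf μ (fun ω => (X ω, Y ω)) p :=
      lt_of_le_of_ne (probOf_nonneg μ hμ0 _ _) (Ne.symm hq)
    have hle : probOf μ (fun ω => (X ω, Y ω)) p ≤ probOf μ Y p.2 := by
      rw [← probOf_marginal μ X Y p.2]
      exact Finset.single_le_sum
        (fun x _ => probOf_nonneg μ hμ0 (fun ω => (X ω, Y ω)) (x, p.2))
        (Finset.mem_univ p.1)
    have := Real.logb_le_logb_of_le (by norm_num : (1:ℝ) < 2) hq0 hle
    nlinarith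

/-- If `X` is determined by `Y` on the support of `μ`, then `H(X,Y) = H(Y)`. -/
lemma Hent_pair_eq_of_det (μ : Ω → ℝ) (hμ0 : ∀ ω, 0 ≤ μ ω) (X : Ω → S) (Y : Ω → T)
    (hdet : ∀ ω ω', μ ω ≠ 0 → μ ω' ≠ 0 → Y ω = Y ω' → X ω = X ω') :
    Hent μ (fun ω => (X ω, Y ω)) = Hent μ Y := by
  classical
  have key : ∀ p : S × T, probOf μ (fun ω => (X ω, Y ω)) p ≠ 0 →
      probOf μ (fun ω => (X ω, Y ω)) p = probOf μ Y p.2 := by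
    rintro ⟨x, y⟩ hq
    obtain ⟨ω0, hω0, hXY0⟩ := exists_of_probOf_ne_zero μ _ _ hq
    rw [← probOf_marginal μ X Y y]
    symm
    apply Finset.sum_eq_single
    · intro x' _ hx'
      by_contra hq'
      obtain ⟨ω', hω', hXY'⟩ := exists_of_probOf_ne_zero μ _ _ hq'
      obtain ⟨hx'1, hy'1⟩ := Prod.ext_iff.mp hXY'
      obtain ⟨hx01, hy01⟩ := Prod.ext_iff.mp hXY0
      simp only at hx'1 hy'1 hx01 hy01
      have h1 : Y ω' = Y ω0 := by rw [hy'1, hy01]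
      have := hdet ω' ω0 hω' hω0 h1
      rw [hx'1, hx01] at this
      exact hx' this
    · intro h; exact absurd (Finset.mem_univ x) h
  have : Hent μ (fun ω => (X ω, Y ω)) - Hent μ Y = 0 := by
    rw [Hent_pair_sub]
    apply Finset.sum_eq_zero
    intro p _
    by_cases hq : probOf μ (fun ω => (X ω, Y ω)) p = 0
    · rw [hq]; ring
    · rw [key p hq]; ring
  linarith

/-- Conversely, if `H(X,Y) = H(Y)` then `X` is determined by `Y` on the support of `μ`. -/
lemma det_of_Hent_pair_eq (μ : Ω → ℝ) (hμ0 : ∀ ω, 0 ≤ μ ω) (X : Ω → S) (Y : Ω → T)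
    (h : Hent μ (fun ω => (X ω, Y ω)) = Hent μ Y) :
    ∀ ω ω', μ ω ≠ 0 → μ ω' ≠ 0 → Y ω = Y ω' → X ω = X ω' := by
  classical
  have hsum : ∑ p : S × T, probOf μ (fun ω => (X ω, Y ω)) p *
      (Real.logb 2 (probOf μ Y p.2)
        - Real.logb 2 (probOf μ (fun ω => (X ω, Y ω)) p)) = 0 := by
    rw [← Hent_pair_sub]; linarith
  have hterm := (Finset.sum_eq_zero_iff_of_nonneg
    (fun p _ => Hent_pair_term_nonneg μ hμ0 X Y p)).mp hsum
  have key : ∀ p : S × T, probOf μ (fun ω => (X ω, Y ω)) p ≠ 0 →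
      probOf μ (fun ω => (X ω, Y ω)) p = probOf μ Y p.2 := by
    intro p hq
    have hq0 : 0 < probOf μ (fun ω => (X ω, Y ω)) p :=
      lt_of_le_of_ne (probOf_nonneg μ hμ0 _ _) (Ne.symm hq)
    have hle : probOf μ (fun ω => (X ω, Y ω)) p ≤ probOf μ Y p.2 := by
      rw [← probOf_marginal μ X Y p.2]
      exact Finset.single_le_sum
        (fun x _ => probOf_nonneg μ hμ0 (fun ω => (X ω, Y ω)) (x, p.2))
        (Finset.mem_univ p.1)
    have ht := hterm p (Finset.mem_univ p)
    have hlog : Real.logb 2 (probOf μ Y p.2)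
        = Real.logb 2 (probOf μ (fun ω => (X ω, Y ω)) p) := by
      by_contra hne
      have : Real.logb 2 (probOf μ Y p.2)
          - Real.logb 2 (probOf μ (fun ω => (X ω, Y ω)) p) ≠ 0 := sub_ne_zero.mpr hne
      exact (mul_ne_zero hq this) ht
    exact (Real.logb_injOn_pos (by norm_num : (1:ℝ) < 2)
      (Set.mem_Ioi.mpr (lt_of_lt_of_le hq0 hle)) (Set.mem_Ioi.mpr hq0) hlog).symm
  intro ω ω' hω hω' hY
  by_contra hX
  set y := Y ω with hy
  have hq1 : 0 < probOf μ (fun ω => (X ω, Y ω)) (X ω, y) :=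
    lt_of_lt_of_le (lt_of_le_of_ne (hμ0 ω) (Ne.symm hω))
      (le_probOf μ hμ0 (fun ω => (X ω, Y ω)) ω)
  have hq2 : 0 < probOf μ (fun ω => (X ω, Y ω)) (X ω', y) := by
    have := le_probOf μ hμ0 (fun ω => (X ω, Y ω)) ω'
    rw [← hY] at this
    exact lt_of_lt_of_le (lt_of_le_of_ne (hμ0 ω') (Ne.symm hω')) this
  have he1 := key (X ω, y) (ne_of_gt hq1)
  have he2 := key (X ω', y) (ne_of_gt hq2)
  have hsum2 : probOf μ (fun ω => (X ω, Y ω)) (X ω, y)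
      + probOf μ (fun ω => (X ω, Y ω)) (X ω', y) ≤ probOf μ Y y := by
    have hsub := Finset.sum_le_sum_of_subset_of_nonneg
      (Finset.subset_univ ({X ω, X ω'} : Finset S))
      (f := fun x => probOf μ (fun ω => (X ω, Y ω)) (x, y))
      (fun x _ _ => probOf_nonneg μ hμ0 (fun ω => (X ω, Y ω)) (x, y))
    rw [Finset.sum_pair hX] at hsub
    rw [← probOf_marginal μ X Y y]
    exact hsub
  simp only at he1 he2
  rw [he1, he2] at hsum2
  linarith

end Aux
set_option maxHeartbeats 1000000 in
/-- Lemma 2: for MDS variables, I(Z_k^{≤n} ; (Z_u^{≤n})_{u∈U}) = H(Z_k^{≤n}) whenever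
`U ⊆ [K]∖{k}` and `|U| = n`. -/
theorem mds_mutualInfo_eq_entropy
    (K : ℕ) (hK : 1 ≤ K) (L : ℝ) (hL : 0 < L)
    (Ω : Type) [Fintype Ω] (μ : Ω → ℝ)
    (hμ0 : ∀ ω, 0 ≤ μ ω) (hμ1 : (∑ ω, μ ω) = 1)
    (T : Type) [Fintype T]
    (ZM : Fin K → Fin K → Ω → T)
    -- for every n, (Z_1^n, …, Z_K^n) is (K,n)-MDS with symbol size L
    (hMDS : ∀ (n : Fin K) (U : Finset (Fin K)),
      Hent μ (fun ω (u : ↥U) => ZM n u.1 ω) = (min U.card (n.1 + 1) : ℕ) * L) :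
    ∀ (n k : Fin K) (U : Finset (Fin K)), k ∉ U → U.card = n.1 + 1 →
      MI μ (Zle ZM n k) (fun ω (u : ↥U) => Zle ZM n u.1 ω)
        = Hent μ (Zle ZM n k) := by
  classical
  intro n k U hkU hUcard
  have hVcard : (insert k U).card = n.1 + 2 := by
    rw [Finset.card_insert_of_notMem hkU, hUcard]
  -- level-wise determinism
  have hdetlvl : ∀ m : Fin (n.1 + 1), ∀ ω ω', μ ω ≠ 0 → μ ω' ≠ 0 →
      (fun u : ↥U => ZM (Fin.castLE n.isLt m) u.1 ω)
        = (fun u : ↥U => ZM (Fin.castLE n.isLt m) u.1 ω') →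
      ZM (Fin.castLE n.isLt m) k ω = ZM (Fin.castLE n.isLt m) k ω' := by
    intro m
    set lvl : Fin K := Fin.castLE n.isLt m with hlvl
    have hlvlval : lvl.1 = m.1 := rfl
    -- bijection between (insert k U)-tuples and (value at k, U-tuple)
    have hf : Function.Injective (fun g : (↥(insert k U) → T) =>
        (g ⟨k, Finset.mem_insert_self k U⟩,
         fun u : ↥U => g ⟨u.1, Finset.mem_insert_of_mem u.2⟩)) := by
      intro g g' h
      have h1 := congrArg Prod.fst h
      have h2 := congrArg Prod.snd h
      simp only at h1 h2
      funext v
      rcases Finset.mem_insert.mp v.2 with hv | hv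
      · have hvk : v = ⟨k, Finset.mem_insert_self k U⟩ := Subtype.ext hv
        rw [hvk]; exact h1
      · have := congrFun h2 ⟨v.1, hv⟩
        simp only at this
        have hvv : (⟨v.1, Finset.mem_insert_of_mem hv⟩ : ↥(insert k U)) = v :=
          Subtype.ext rfl
        rw [← hvv]; exact this
    have h1 : Hent μ (fun ω => (ZM lvl k ω, fun u : ↥U => ZM lvl u.1 ω))
        = Hent μ (fun ω (v : ↥(insert k U)) => ZM lvl v.1 ω) :=
      Hent_comp_injective μ (fun ω (v : ↥(insert k U)) => ZM lvl v.1 ω) _ hf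
    have hm : m.1 < n.1 + 1 := m.isLt
    have h2 : Hent μ (fun ω (v : ↥(insert k U)) => ZM lvl v.1 ω)
        = Hent μ (fun ω (u : ↥U) => ZM lvl u.1 ω) := by
      rw [hMDS lvl (insert k U), hMDS lvl U, hVcard, hUcard]
      congr 2
      omega
    have hdet := det_of_Hent_pair_eq μ hμ0 (ZM lvl k)
      (fun ω (u : ↥U) => ZM lvl u.1 ω) (h1.trans h2)
    exact hdet
  -- determinism for the full tuples
  have hdet : ∀ ω ω', μ ω ≠ 0 → μ ω' ≠ 0 →
      (fun u : ↥U => Zle ZM n u.1 ω) = (fun u : ↥U => Zle ZM n u.1 ω') →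
      Zle ZM n k ω = Zle ZM n k ω' := by
    intro ω ω' hω hω' hY
    funext m
    apply hdetlvl m ω ω' hω hω'
    funext u
    exact congrFun (congrFun hY u) m
  have hpair := Hent_pair_eq_of_det μ hμ0 (Zle ZM n k)
    (fun ω (u : ↥U) => Zle ZM n u.1 ω) hdet
  unfold MI
  rw [hpair]
  ring
end

section
/- Let q be a prime power, L ≥ 1, n ≥ 1, and let U be a finite index set with |U| = n + 1. Let (G_u)_{u∈U} be jointly distributed random vectors in F_q^L such that Σ_{u∈U} G_u = 0 (the zero vector, almost surely) and such that any n of the variables (G_u)_{u∈U} are mutually independent and each uniformly distributed on F_q^L. Let (W_u)_{u∈U} be i.i.d. uniform random vectors in F_q^L, independent of (G_u)_{u∈U}. Define X_u = W_u + G_u for each u ∈ U. Then: (i) Σ_{u∈U} X_u = Σ_{u∈U} W_u (correctness), and (ii) I((W_u)_{u∈U}; (X_u)_{u∈U} | Σ_{u∈U} W_u) = 0 (security). -/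
open scoped BigOperators

open Classical in
lemma sum_probOf {Ω S : Type*} [Fintype Ω] [Fintype S] (μ : Ω → ℝ) (X : Ω → S) :
    ∑ s : S, probOf μ X s = ∑ ω, μ ω := by
  unfold probOf
  simp only [Finset.sum_filter]
  rw [Finset.sum_comm]
  refine Finset.sum_congr rfl fun ω _ => ?_
  simp

open Classical in
lemma probOf_comp {Ω A S : Type*} [Fintype Ω] [Fintype A] (μ : Ω → ℝ) (Y : Ω → A) (f : A → S)
    (s : S) :
    probOf μ (fun ω => f (Y ω)) s = ∑ y ∈ Finset.univ.filter (fun y => f y = s), probOf μ Y y := by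
  unfold probOf
  simp only [Finset.sum_filter]
  have h1 : ∀ a : A, (if f a = s then (∑ ω, if Y ω = a then μ ω else 0) else 0)
      = ∑ ω, if f a = s ∧ Y ω = a then μ ω else 0 := by
    intro a; by_cases h : f a = s <;> simp [h]
  rw [Finset.sum_congr rfl fun a _ => h1 a, Finset.sum_comm]
  refine Finset.sum_congr rfl fun ω _ => ?_
  have h2 : ∀ a : A, (if f a = s ∧ Y ω = a then μ ω else 0)
      = if Y ω = a then (if f a = s then μ ω else 0) else 0 := by
    intro a; by_cases h : Y ω = a <;> simp [h, and_comm]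
  rw [Finset.sum_congr rfl fun a _ => h2 a, Finset.sum_ite_eq]
  simp

open Classical in
lemma probOf_congr {Ω S T : Type*} [Fintype Ω] (μ : Ω → ℝ) (X : Ω → S) (X' : Ω → T)
    (s : S) (s' : T) (h : ∀ ω, μ ω ≠ 0 → (X ω = s ↔ X' ω = s')) :
    probOf μ X s = probOf μ X' s' := by
  unfold probOf
  simp only [Finset.sum_filter]
  refine Finset.sum_congr rfl fun ω _ => ?_
  by_cases hμ : μ ω = 0
  · simp [hμ]
  · exact if_congr (h ω hμ) rfl rfl

open Classical in
lemma Hent_flat {Ω S : Type*} [Fintype Ω] [Fintype S] (μ : Ω → ℝ) (X : Ω → S) (c : ℝ)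
    (hμ1 : ∑ ω, μ ω = 1) (hdich : ∀ s, probOf μ X s = 0 ∨ probOf μ X s = c) :
    Hent μ X = - Real.logb 2 c := by
  unfold Hent
  have h : ∀ s : S, probOf μ X s * Real.logb 2 (probOf μ X s) = probOf μ X s * Real.logb 2 c := by
    intro s
    rcases hdich s with h | h <;> rw [h] <;> simp
  rw [Finset.sum_congr rfl (fun s _ => h s), ← Finset.sum_mul, sum_probOf, hμ1, one_mul]

open Classical in
lemma fiber_card {ι F : Type*} {L : ℕ} [Fintype ι] [DecidableEq ι] [Nonempty ι] [Field F] [Fintype F] (z : Fin L → F) :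
    (Finset.univ.filter (fun v : ι → Fin L → F => ∑ u, v u = z)).card
      = (Finset.univ.filter (fun v : ι → Fin L → F => ∑ u, v u = 0)).card := by
  classical
  obtain ⟨u0⟩ := ‹Nonempty ι›
  have hupd : ∀ (v : ι → Fin L → F) (b : Fin L → F),
      ∑ u, Function.update v u0 b u = b + (∑ u, v u) - v u0 := by
    intro v b
    rw [Finset.sum_update_of_mem (Finset.mem_univ u0)]
    rw [show Finset.univ \ {u0} = Finset.univ.erase u0 from by simp [Finset.erase_eq]]
    rw [← Finset.add_sum_erase Finset.univ v (Finset.mem_univ u0)]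
    abel
  refine Finset.card_bij' (fun v _ => Function.update v u0 (v u0 - z))
    (fun v _ => Function.update v u0 (v u0 + z)) ?_ ?_ ?_ ?_
  · intro v hv
    simp only [Finset.mem_filter, Finset.mem_univ, true_and] at hv ⊢
    rw [hupd, hv]; abel
  · intro v hv
    simp only [Finset.mem_filter, Finset.mem_univ, true_and] at hv ⊢
    rw [hupd, hv]; abel
  · intro v _
    simp [Function.update_idem, Function.update_self]
  · intro v _
    simp [Function.update_idem, Function.update_self]

/-- One-time-pad style secure summation from MDS keys: if the keys (G_u)_{u∈U} (|U| = n+1)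
sum to zero almost surely, any n of them are i.i.d. uniform on F_q^L, and the inputs
(W_u)_{u∈U} are i.i.d. uniform on F_q^L independent of the keys, then the messages
X_u = W_u + G_u are correct (they sum to Σ W_u) and secure
(I((W_u)_u; (X_u)_u | Σ_u W_u) = 0). -/
theorem onetimepad_sum_correct_and_secure
    (q L n : ℕ) (hq : IsPrimePow q) (hL : 1 ≤ L) (hn : 1 ≤ n)
    (F : Type) [Field F] [Fintype F] (hF : Fintype.card F = q)
    (ι : Type) [Fintype ι] [DecidableEq ι] (hι : Fintype.card ι = n + 1)
    (Ω : Type) [Fintype Ω] (μ : Ω → ℝ)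
    (hμ0 : ∀ ω, 0 ≤ μ ω) (hμ1 : (∑ ω, μ ω) = 1)
    (G W : ι → Ω → (Fin L → F))
    -- Σ_{u∈U} G_u = 0 almost surely
    (hGzero : ∀ ω, μ ω ≠ 0 → (∑ u : ι, G u ω) = 0)
    -- any n of the (G_u)_{u∈U} are mutually independent, each uniform on F_q^L
    (hGmds : ∀ V : Finset ι, V.card = n → ∀ g : ↥V → (Fin L → F),
      probOf μ (fun ω (u : ↥V) => G u.1 ω) g = ((q : ℝ) ^ (L * n))⁻¹)
    -- the (W_u)_{u∈U} are i.i.d. uniform on F_q^L and independent of (G_u)_{u∈U}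
    (hWunifInd : ∀ (w g : ι → Fin L → F),
      probOf μ (fun ω => ((fun u : ι => W u ω), (fun u : ι => G u ω))) (w, g)
        = ((q : ℝ) ^ (L * (n + 1)))⁻¹ * probOf μ (fun ω (u : ι) => G u ω) g) :
    -- (i) correctness and (ii) security of the messages X_u = W_u + G_u
    (∀ ω, μ ω ≠ 0 → (∑ u : ι, (W u ω + G u ω)) = ∑ u : ι, W u ω) ∧
    CMI μ (fun ω (u : ι) => W u ω) (fun ω (u : ι) => W u ω + G u ω)
      (fun ω => ∑ u : ι, W u ω) = 0 := by
  classical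
  haveI hne : Nonempty ι := Fintype.card_pos_iff.mp (by rw [hι]; omega)
  have u0 : ι := Classical.arbitrary ι
  -- correctness
  have hcorrect : ∀ ω, μ ω ≠ 0 → (∑ u : ι, (W u ω + G u ω)) = ∑ u : ι, W u ω := by
    intro ω hμ
    rw [Finset.sum_add_distrib, hGzero ω hμ, add_zero]
  refine ⟨hcorrect, ?_⟩
  -- basic positivity
  have hq2 : 2 ≤ q := hq.two_le
  have hqR : (0:ℝ) < (q:ℝ) := by positivity
  set c₀ : ℝ := ((q : ℝ) ^ (L * (n + 1)))⁻¹ * ((q : ℝ) ^ (L * n))⁻¹ with hc₀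
  have hc₀pos : 0 < c₀ := by positivity
  -- distribution of the keys
  have hPG : ∀ g : ι → Fin L → F, probOf μ (fun ω (u : ι) => G u ω) g
      = if (∑ u, g u) = 0 then ((q : ℝ) ^ (L * n))⁻¹ else 0 := by
    intro g
    by_cases h : (∑ u, g u) = 0
    · rw [if_pos h]
      set V : Finset ι := Finset.univ.erase u0 with hVdef
      have hV : V.card = n := by
        rw [hVdef, Finset.card_erase_of_mem (Finset.mem_univ u0), Finset.card_univ, hι]
        omega
      rw [← hGmds V hV (fun u => g u.1)]
      refine probOf_congr μ _ _ _ _ fun ω hμ => ?_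
      constructor
      · intro he
        funext u
        exact congrFun he u.1
      · intro he
        have hVeq : ∀ u ∈ V, G u ω = g u := fun u hu => congrFun he ⟨u, hu⟩
        have hsum : ∑ u ∈ V, G u ω = ∑ u ∈ V, g u := Finset.sum_congr rfl hVeq
        have h0 : G u0 ω + ∑ u ∈ V, G u ω = 0 := by
          rw [hVdef]
          rw [Finset.add_sum_erase Finset.univ (fun u => G u ω) (Finset.mem_univ u0)]
          exact hGzero ω hμ
        have h0' : g u0 + ∑ u ∈ V, g u = 0 := by
          rw [hVdef]
          rw [Finset.add_sum_erase Finset.univ g (Finset.mem_univ u0)]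
          exact h
        have hu0 : G u0 ω = g u0 := by
          have := h0.trans h0'.symm
          rw [hsum] at this
          exact add_right_cancel this
        funext u
        by_cases hu : u = u0
        · rw [hu]; exact hu0
        · exact hVeq u (Finset.mem_erase.mpr ⟨hu, Finset.mem_univ u⟩)
    · rw [if_neg h]
      unfold probOf
      refine Finset.sum_eq_zero fun ω hω => ?_
      simp only [Finset.mem_filter] at hω
      by_contra hμ
      exact h (by rw [show g = fun u => G u ω from hω.2.symm]; exact hGzero ω hμ)
  -- joint distribution of (W, G)
  have hP : ∀ w g : ι → Fin L → F,
      probOf μ (fun ω => ((fun u : ι => W u ω), (fun u : ι => G u ω))) (w, g)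
        = if (∑ u, g u) = 0 then c₀ else 0 := by
    intro w g
    rw [hWunifInd w g, hPG g]
    by_cases h : (∑ u, g u) = 0 <;> simp [h, hc₀]
  -- key reduction: distributions of functions of (W, G)
  have hkey : ∀ {S : Type} [Fintype S] (f : ((ι → Fin L → F) × (ι → Fin L → F)) → S) (s : S),
      probOf μ (fun ω => f ((fun u : ι => W u ω), (fun u : ι => G u ω))) s
        = ∑ w : ι → Fin L → F, ∑ g : ι → Fin L → F,
            if f (w, g) = s ∧ (∑ u, g u) = 0 then c₀ else 0 := by
    intro S _ f s
    refine (probOf_comp μ (fun ω => ((fun u : ι => W u ω), (fun u : ι => G u ω))) f s).trans ?_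
    rw [Finset.sum_filter]
    rw [Fintype.sum_prod_type]
    refine Finset.sum_congr rfl fun w _ => Finset.sum_congr rfl fun g _ => ?_
    rw [hP w g]
    by_cases h1 : f (w, g) = s <;> by_cases h2 : (∑ u, g u) = 0 <;> simp [h1, h2]
  -- the fiber count
  set N : ℕ := (Finset.univ.filter (fun v : ι → Fin L → F => ∑ u, v u = 0)).card with hNdef
  have hNpos : 0 < N := by
    rw [hNdef]
    refine Finset.card_pos.mpr ⟨0, ?_⟩
    simp
  have hNR : (0:ℝ) < (N:ℝ) := by exact_mod_cast hNpos
  have hsum : ∀ (z : Fin L → F) (r : ℝ),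
      (∑ v : ι → Fin L → F, if (∑ u, v u) = z then r else 0) = (N:ℝ) * r := by
    intro z r
    rw [← Finset.sum_filter, Finset.sum_const, fiber_card z, ← hNdef, nsmul_eq_mul]
  -- distribution of Z = Σ W
  have hZ : ∀ z : Fin L → F, probOf μ (fun ω => ∑ u : ι, W u ω) z = (N:ℝ) * ((N:ℝ) * c₀) := by
    intro z
    refine (hkey (fun y => ∑ u, y.1 u) z).trans ?_
    simp only [ite_and]
    rw [Finset.sum_congr rfl fun w _ => (Finset.sum_ite_irrel _ _ _ _)]
    simp only [Finset.sum_const_zero]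
    rw [Finset.sum_congr rfl fun w _ => if_congr Iff.rfl (hsum 0 c₀) rfl]
    exact hsum z ((N:ℝ) * c₀)
  -- distribution of (W, Z)
  have hWZ : ∀ p : (ι → Fin L → F) × (Fin L → F),
      probOf μ (fun ω => ((fun u : ι => W u ω), ∑ u : ι, W u ω)) p
        = if (∑ u, p.1 u) = p.2 then (N:ℝ) * c₀ else 0 := by
    rintro ⟨w₀, z⟩
    refine (hkey (fun y => (y.1, ∑ u, y.1 u)) (w₀, z)).trans ?_
    simp only [Prod.mk.injEq, ite_and]
    have e1 : ∀ w : ι → Fin L → F,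
        (∑ g : ι → Fin L → F, if w = w₀ then
            (if (∑ u, w u) = z then (if (∑ u, g u) = 0 then c₀ else 0) else 0) else 0)
          = if w = w₀ then (if (∑ u, w u) = z then (N:ℝ) * c₀ else 0) else 0 := by
      intro w
      rw [Finset.sum_ite_irrel, Finset.sum_ite_irrel, hsum 0 c₀]
      simp only [Finset.sum_const_zero]
    rw [Finset.sum_congr rfl fun w _ => e1 w, Finset.sum_ite_eq' Finset.univ w₀]
    simp
  -- distribution of (X, Z)
  have hXZ : ∀ p : (ι → Fin L → F) × (Fin L → F),
      probOf μ (fun ω => ((fun u : ι => W u ω + G u ω), ∑ u : ι, W u ω)) p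
        = if (∑ u, p.1 u) = p.2 then (N:ℝ) * c₀ else 0 := by
    rintro ⟨x, z⟩
    refine (hkey (fun y => ((fun u => y.1 u + y.2 u), ∑ u, y.1 u)) (x, z)).trans ?_
    have hiff : ∀ w g : ι → Fin L → F,
        (((fun u => w u + g u), ∑ u, w u) = (x, z) ∧ (∑ u, g u) = 0)
          ↔ ((g = fun u => x u - w u) ∧ ((∑ u, x u) = z ∧ (∑ u, w u) = z)) := by
      intro w g
      simp only [Prod.mk.injEq]
      constructor
      · rintro ⟨⟨hfun, hw⟩, hg⟩
        have hgeq : g = fun u => x u - w u := by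
          funext u
          exact eq_sub_of_add_eq' (congrFun hfun u)
        have hx : (∑ u, x u) = z := by
          have h1 : ∑ u, x u = ∑ u, (w u + g u) :=
            Finset.sum_congr rfl fun u _ => (congrFun hfun u).symm
          rw [Finset.sum_add_distrib, hw, hg, add_zero] at h1
          exact h1
        exact ⟨hgeq, hx, hw⟩
      · rintro ⟨hgeq, hx, hw⟩
        subst hgeq
        refine ⟨⟨?_, hw⟩, ?_⟩
        · funext u
          exact add_sub_cancel (w u) (x u)
        · rw [Finset.sum_sub_distrib, hx, hw, sub_self]
    simp only [hiff, ite_and]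
    have e1 : ∀ w : ι → Fin L → F,
        (∑ g : ι → Fin L → F, if g = (fun u => x u - w u) then
            (if (∑ u, x u) = z then (if (∑ u, w u) = z then c₀ else 0) else 0) else 0)
          = if (∑ u, x u) = z then (if (∑ u, w u) = z then c₀ else 0) else 0 := by
      intro w
      rw [Finset.sum_ite_eq' Finset.univ]
      simp
    rw [Finset.sum_congr rfl fun w _ => e1 w, Finset.sum_ite_irrel, hsum z c₀]
    simp only [Finset.sum_const_zero]
  -- distribution of (W, (X, Z))
  have hWXZ : ∀ p : (ι → Fin L → F) × ((ι → Fin L → F) × (Fin L → F)),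
      probOf μ (fun ω => ((fun u : ι => W u ω),
          ((fun u : ι => W u ω + G u ω), ∑ u : ι, W u ω))) p
        = if ((∑ u, (p.2.1 u - p.1 u)) = 0 ∧ (∑ u, p.1 u) = p.2.2) then c₀ else 0 := by
    rintro ⟨w₀, x, z⟩
    refine (hkey (fun y => (y.1, ((fun u => y.1 u + y.2 u), ∑ u, y.1 u))) (w₀, x, z)).trans ?_
    have hiff : ∀ w g : ι → Fin L → F,
        ((w, ((fun u => w u + g u), ∑ u, w u)) = (w₀, (x, z)) ∧ (∑ u, g u) = 0)
          ↔ (w = w₀ ∧ ((g = fun u => x u - w₀ u)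
              ∧ ((∑ u, (x u - w₀ u)) = 0 ∧ (∑ u, w₀ u) = z))) := by
      intro w g
      simp only [Prod.mk.injEq]
      constructor
      · rintro ⟨⟨h1, h2, h3⟩, hg⟩
        subst h1
        have hgeq : g = fun u => x u - w u := by
          funext u
          exact eq_sub_of_add_eq' (congrFun h2 u)
        refine ⟨rfl, hgeq, ?_, h3⟩
        rw [show (∑ u, (x u - w u)) = ∑ u, g u from
          Finset.sum_congr rfl fun u _ => (congrFun hgeq u).symm]
        exact hg
      · rintro ⟨h1, hgeq, h4, h5⟩
        subst h1
        subst hgeq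
        refine ⟨⟨rfl, ?_, h5⟩, h4⟩
        funext u
        exact add_sub_cancel (w u) (x u)
    simp only [hiff, ite_and]
    have e1 : ∀ w : ι → Fin L → F,
        (∑ g : ι → Fin L → F, if w = w₀ then (if g = (fun u => x u - w₀ u) then
            (if (∑ u, (x u - w₀ u)) = 0 then (if (∑ u, w₀ u) = z then c₀ else 0) else 0)
            else 0) else 0)
          = if w = w₀ then (if (∑ u, (x u - w₀ u)) = 0 then
              (if (∑ u, w₀ u) = z then c₀ else 0) else 0) else 0 := by
      intro w
      rw [Finset.sum_ite_irrel, Finset.sum_ite_eq' Finset.univ]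
      simp
    rw [Finset.sum_congr rfl fun w _ => e1 w, Finset.sum_ite_eq' Finset.univ w₀]
    simp
  -- entropies
  have hc₀ne : c₀ ≠ 0 := ne_of_gt hc₀pos
  have hNne : (N:ℝ) ≠ 0 := ne_of_gt hNR
  have eZ : Hent μ (fun ω => ∑ u : ι, W u ω) = - Real.logb 2 ((N:ℝ) * ((N:ℝ) * c₀)) :=
    Hent_flat μ _ _ hμ1 (fun z => Or.inr (hZ z))
  have eWZ : Hent μ (fun ω => ((fun u : ι => W u ω), ∑ u : ι, W u ω))
      = - Real.logb 2 ((N:ℝ) * c₀) := by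
    refine Hent_flat μ _ _ hμ1 (fun p => ?_)
    rw [hWZ p]
    by_cases h : (∑ u, p.1 u) = p.2 <;> simp [h]
  have eXZ : Hent μ (fun ω => ((fun u : ι => W u ω + G u ω), ∑ u : ι, W u ω))
      = - Real.logb 2 ((N:ℝ) * c₀) := by
    refine Hent_flat μ _ _ hμ1 (fun p => ?_)
    rw [hXZ p]
    by_cases h : (∑ u, p.1 u) = p.2 <;> simp [h]
  have eWXZ : Hent μ (fun ω => ((fun u : ι => W u ω),
      ((fun u : ι => W u ω + G u ω), ∑ u : ι, W u ω))) = - Real.logb 2 c₀ := by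
    refine Hent_flat μ _ _ hμ1 (fun p => ?_)
    rw [hWXZ p]
    by_cases h : ((∑ u, (p.2.1 u - p.1 u)) = 0 ∧ (∑ u, p.1 u) = p.2.2)
    · exact Or.inr (if_pos h)
    · exact Or.inl (if_neg h)
  -- conclusion
  simp only [CMI, Hcond]
  rw [eWZ, eZ, eWXZ, eXZ]
  rw [Real.logb_mul hNne (mul_ne_zero hNne hc₀ne), Real.logb_mul hNne hc₀ne]
  ring
end
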